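/- If the monoid ([0, 1_⊙], ⊙) is commutative, then the pseudo-multiplication ⊙ is non-degenerate, i.e., O(1_⊙) = inf_{s>0} s ⊙ 1_⊙ = 0. -/

import Mathlib

open Set Filter Topology
open scoped ENNReal

/-- A pseudo-multiplication on `[0,∞]`. -/
structure PseudoMul where
  mul : ℝ≥0∞ → ℝ≥0∞ → ℝ≥0∞
  assoc : ∀ a b c, mul (mul a b) c = mul a (mul b c)
  continuousOn : ContinuousOn (fun p : ℝ≥0∞ × ℝ≥0∞ => mul p.1 p.2) (Ioo 0 ⊤ ×ˢ univ)
  continuousOn_left : ∀ t, ContinuousOn (fun s => mul s t) (Ioi 0)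
  mono : ∀ ⦃a b : ℝ≥0∞⦄, a ≤ b → ∀ ⦃c d : ℝ≥0∞⦄, c ≤ d → mul a c ≤ mul b d
  one : ℝ≥0∞
  one_mul : ∀ t, mul one t = t
  eq_zero_of_mul : ∀ s t, mul s t = 0 → s = 0 ∨ t = 0
  zero_mul : ∀ t, mul 0 t = 0
  mul_zero : ∀ t, mul t 0 = 0

/-- The kernel `O(t) = ⨅_{s>0} s ⊙ t`. -/
noncomputable def PseudoMul.O (P : PseudoMul) (t : ℝ≥0∞) : ℝ≥0∞ :=
  ⨅ s ∈ Ioi (0 : ℝ≥0∞), P.mul s t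

/-! For `0 < s ≤ 1_⊙`, commutativity gives `s ⊙ 1_⊙ = 1_⊙ ⊙ s = s`, so `O(1_⊙)` lies below
every sufficiently small positive `s`. -/

namespace PseudoMul

variable (P : PseudoMul)

theorem one_pos : 0 < P.one :=
  pos_iff_ne_zero.mpr fun h => by simpa [h, P.zero_mul] using P.one_mul 1

theorem O_le_mul {s : ℝ≥0∞} (hs : 0 < s) (t : ℝ≥0∞) : P.O t ≤ P.mul s t :=
  biInf_le (fun s => P.mul s t) hs

theorem O_one_le {s : ℝ≥0∞} (hs : 0 < s) (hcomm : P.mul s P.one = P.mul P.one s) :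
    P.O P.one ≤ s := by
  simpa only [hcomm, P.one_mul] using P.O_le_mul hs P.one

end PseudoMul

theorem nondegenerate_of_commutative (P : PseudoMul)
    (hcomm : ∀ s ∈ Icc 0 P.one, ∀ t ∈ Icc 0 P.one, P.mul s t = P.mul t s) :
    P.O P.one = 0 := by
  refine nonpos_iff_eq_zero.mp (le_of_forall_gt_imp_ge_of_dense fun a ha => ?_)
  have hs : min a P.one ∈ Icc 0 P.one := ⟨zero_le, min_le_right _ _⟩
  calc P.O P.one ≤ min a P.one :=
        P.O_one_le (lt_min ha P.one_pos) (hcomm _ hs _ ⟨zero_le, le_rfl⟩)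
    _ ≤ a := min_le_left _ _
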